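/- Let B be a finite family of bonds, Φ(X) bounded operators for X∈B, and define ξ(B) via the Möbius transform of e^{-βH_{B'}}. Define for s ∈ [0,1]^B the function G(s) = e^{-β Σ_{X∈B} s_X Φ(X)}. Then ξ(B) = Π_{X∈B} [∫_0^1 ds_X ∂/∂s_X] G(s), i.e., the iterated integral of the full mixed partial derivative of G over the unit cube [0,1]^B. -/

import Mathlib

/-!
By the fundamental theorem of calculus, `∫_0^1 ds_x ∂/∂s_x` sends a `C¹` function to the
difference of its restrictions to the faces `s_x = 1` and `s_x = 0`, and the result is again
`C¹`. Iterating over `B` turns `G` into its mixed finite difference over the corners of the cube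
`[0,1]^B`: the corner equal to the indicator of `B' ⊆ B` contributes
`(-1)^{|B \ B'|} G(1_{B'}) = (-1)^{|B \ B'|} e^{-β H_{B'}}`.
-/

open NormedSpace

/-- The iterated operator `Π_{x ∈ l} [∫_0^1 ds_x ∂/∂s_x]` acting on functions of
finitely many real decoupling parameters. -/
noncomputable def intPartial {ι : Type*} [Fintype ι] [DecidableEq ι]
    {A : Type*} [NormedAddCommGroup A] [NormedSpace ℝ A] :
    List ι → ((ι → ℝ) → A) → ((ι → ℝ) → A)
  | [], f => f
  | x :: xs, f => fun s =>
      ∫ t in (0:ℝ)..1,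
        fderiv ℝ (intPartial xs f) (Function.update s x t) (Pi.single x 1)

open Finset Function

section MixedDifference

variable {ι A : Type*} [DecidableEq ι] [AddCommGroup A]

/-- `S.piecewise 1 (T.piecewise 0 s)` is the corner `1_S` of the cube `[0,1]^T`, with the
coordinates outside `T` taken from `s`. -/
def mixedDifference (T : Finset ι) (f : (ι → ℝ) → A) (s : ι → ℝ) : A :=
  ∑ S ∈ T.powerset, (-1 : ℤ) ^ (T \ S).card • f (S.piecewise 1 (T.piecewise 0 s))

theorem mixedDifference_insert {x : ι} {T : Finset ι} (hx : x ∉ T) (f : (ι → ℝ) → A)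
    (s : ι → ℝ) :
    mixedDifference (insert x T) f s =
      mixedDifference T f (update s x 1) - mixedDifference T f (update s x 0) := by
  rw [mixedDifference, sum_powerset_insert hx, add_comm, sub_eq_add_neg, mixedDifference,
    mixedDifference, ← sum_neg_distrib]
  congr 1 <;> refine sum_congr rfl fun S hS => ?_
  · have hxS : x ∉ S := fun h => hx (mem_powerset.1 hS h)
    rw [insert_sdiff_insert, sdiff_insert_of_notMem hx]
    congr 2
    ext y
    by_cases hy : y = x
    · subst hy; simp [hxS, hx]
    · simp [hy, Finset.piecewise]
  · have hxS : x ∉ S := fun h => hx (mem_powerset.1 hS h)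
    rw [insert_sdiff_of_notMem _ hxS, card_insert_of_notMem (fun h => hx (sdiff_subset h)),
      pow_succ, mul_neg_one, neg_smul]
    congr 3
    ext y
    by_cases hy : y = x
    · subst hy; simp [hxS, hx]
    · simp [hy, Finset.piecewise]

end MixedDifference

section Smooth

variable {ι A : Type*} [DecidableEq ι] [Fintype ι] [NormedAddCommGroup A] [NormedSpace ℝ A]

theorem contDiff_piecewise_one_piecewise_zero {n : WithTop ℕ∞} (S T : Finset ι) :
    ContDiff ℝ n fun s : ι → ℝ => S.piecewise (1 : ι → ℝ) (T.piecewise 0 s) := by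
  refine contDiff_pi.2 fun y => ?_
  by_cases hS : y ∈ S
  · simpa [hS] using contDiff_const
  by_cases hT : y ∈ T
  · simpa [hS, hT] using contDiff_const
  · simpa [hS, hT] using contDiff_apply ℝ ℝ y

theorem ContDiff.mixedDifference {n : WithTop ℕ∞} {f : (ι → ℝ) → A} (hf : ContDiff ℝ n f)
    (T : Finset ι) : ContDiff ℝ n (mixedDifference T f) :=
  ContDiff.sum fun S _ => (hf.comp (contDiff_piecewise_one_piecewise_zero S T)).const_smul _

theorem integral_fderiv_update_apply_single [CompleteSpace A] {F : (ι → ℝ) → A}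
    (hF : ContDiff ℝ 1 F) (s : ι → ℝ) (x : ι) :
    ∫ t in (0:ℝ)..1, fderiv ℝ F (update s x t) (Pi.single x 1) =
      F (update s x 1) - F (update s x 0) := by
  have hline : Continuous fun t : ℝ => update s x t := continuous_const.update x continuous_id
  refine intervalIntegral.integral_eq_sub_of_hasDerivAt (f := fun t => F (update s x t))
    (fun t _ => ?_) ?_
  · exact ((hF.differentiable one_ne_zero _).hasFDerivAt).comp_hasDerivAt t
      (hasDerivAt_update s x t)
  · exact (((hF.continuous_fderiv one_ne_zero).comp hline).clm_apply
      continuous_const).intervalIntegrable 0 1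

theorem intPartial_eq_mixedDifference [CompleteSpace A] {f : (ι → ℝ) → A}
    (hf : ContDiff ℝ 1 f) {l : List ι} (hl : l.Nodup) :
    intPartial l f = mixedDifference l.toFinset f := by
  induction l with
  | nil => ext s; simp [mixedDifference, intPartial]; rfl
  | cons x xs ih =>
    obtain ⟨hx, hxs⟩ := List.nodup_cons.1 hl
    ext s
    rw [List.toFinset_cons, mixedDifference_insert (by simpa using hx), intPartial, ih hxs]
    exact integral_fderiv_update_apply_single (hf.mixedDifference _) s x

end Smooth

/-- Decoupling-parameter representation of the polymer fugacity: the alternating sum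
`ξ(B) = Σ_{B' ⊆ B} (-1)^{|B \ B'|} e^{-β H_{B'}}` equals the iterated integral over the
unit cube `[0,1]^B` of the full mixed partial derivative of
`G(s) = e^{-β Σ_{X ∈ B} s_X Φ(X)}`. -/
theorem stmt_10 {ι E : Type*} [Fintype ι] [DecidableEq ι] [LinearOrder ι]
    [NormedAddCommGroup E] [InnerProductSpace ℂ E] [FiniteDimensional ℂ E]
    (Φ : ι → E →L[ℂ] E) (β : ℝ) (B : Finset ι) :
    ∑ B' ∈ B.powerset, ((-1 : ℤ) ^ ((B \ B').card)) •
        exp (-(β • ∑ X ∈ B', Φ X)) =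
      intPartial (B.sort (· ≤ ·))
        (fun u => exp (-(β • ∑ X ∈ B, u X • Φ X))) (fun _ => 0) := by
  have hexp : ContDiff ℝ 1 (exp : (E →L[ℂ] E) → (E →L[ℂ] E)) :=
    (AnalyticOnNhd.contDiff fun y _ => exp_analytic (𝕂 := ℂ) y).restrict_scalars ℝ
  have hG : ContDiff ℝ 1 fun u : ι → ℝ => exp (-(β • ∑ X ∈ B, u X • Φ X)) :=
    hexp.comp (ContDiff.neg (ContDiff.const_smul _ (ContDiff.sum fun X _ =>
      (contDiff_apply ℝ ℝ X).smul contDiff_const)))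
  rw [intPartial_eq_mixedDifference hG (B.sort_nodup _), sort_toFinset, mixedDifference]
  refine sum_congr rfl fun S hS => ?_
  have hcorner : ∑ X ∈ B, S.piecewise (1 : ι → ℝ) (B.piecewise 0 fun _ => 0) X • Φ X =
      ∑ X ∈ S, Φ X := by
    simp [Finset.piecewise, ite_smul, inter_eq_right.2 (mem_powerset.1 hS)]
  rw [hcorner]
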